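/- If w is a right-infinite word with linear factor complexity (p_w(n) ≤ Cn + C for some constant C and all n), then the Lie complexity L_w is uniformly bounded. -/

import Mathlib

/-- `u` is a factor of the right-infinite word `w`. -/
def IsFactor {α : Type*} (w : ℕ → α) (u : List α) : Prop :=
  ∃ i : ℕ, u = (List.range u.length).map fun j => w (i + j)

/-- Factor complexity: the number of factors of `w` of length `n`. -/
noncomputable def factorComplexity {α : Type*} (w : ℕ → α) (n : ℕ) : ℕ :=
  Set.ncard {u : List α | u.length = n ∧ IsFactor w u}

/-- The conjugacy (rotation) class of a finite word. -/
def conjClass {α : Type*} (u : List α) : Set (List α) :=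
  {v | ∃ i : ℕ, v = u.rotate i}

/-- Lie complexity: the number of conjugacy classes of words of length `n`
all of whose elements are factors of `w`. -/
noncomputable def lieComplexity {α : Type*} (w : ℕ → α) (n : ℕ) : ℕ :=
  Set.ncard {C : Set (List α) | ∃ u : List α, u.length = n ∧
    (∀ i : ℕ, IsFactor w (u.rotate i)) ∧ C = conjClass u}

/-!
If `w` is eventually periodic, it has boundedly many factors of each length. Otherwise, the
classes counted by `lieComplexity w n` partition a set of factors of length `n`, so at most `9C`
of them have more than `n / 8` elements. A class `c` with at most `n / 8` elements has a
representative with a rotation period `d ≤ #c`. The run of period `d` through an occurrence of it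
is finite, and for each `ℓ ∈ [n/2, 3n/4)` the `ℓ` letters before the end of the run form a
right-special factor, which by Fine–Wilf determines `c`. So the small classes number at most
`s(ℓ)`, the number of right-special factors of length `ℓ`, for each of these `n / 4` lengths; as
`p(m) + s(m) ≤ p(m + 1)`, the sum of these is at most `p(3n/4) ≤ C (3n/4) + C`, leaving at most
`5C` small classes.
-/

section

open Function Set

variable {α : Type*}

def window (y : ℕ → α) (i ℓ : ℕ) : List α := (List.range ℓ).map fun k => y (i + k)

@[simp] lemma length_window (y : ℕ → α) (i ℓ : ℕ) : (window y i ℓ).length = ℓ := by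
  simp [window]

@[simp] lemma getElem_window (y : ℕ → α) (i ℓ k : ℕ) (h : k < (window y i ℓ).length) :
    (window y i ℓ)[k] = y (i + k) := by
  simp [window]

lemma window_succ (y : ℕ → α) (i ℓ : ℕ) : window y i (ℓ + 1) = window y i ℓ ++ [y (i + ℓ)] := by
  simp [window, List.range_succ]

lemma window_shift (y : ℕ → α) (i j ℓ : ℕ) :
    window (fun k => y (i + k)) j ℓ = window y (i + j) ℓ := by
  simp [window, Nat.add_assoc]

lemma window_eq_window_iff {y z : ℕ → α} {i j ℓ : ℕ} :
    window y i ℓ = window z j ℓ ↔ ∀ k < ℓ, y (i + k) = z (j + k) := by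
  simp [List.ext_getElem_iff]

lemma isFactor_window (y : ℕ → α) (i ℓ : ℕ) : IsFactor y (window y i ℓ) := ⟨i, by simp [window]⟩

lemma IsFactor.of_shift {w : ℕ → α} {i : ℕ} {u : List α} (h : IsFactor (fun k => w (i + k)) u) :
    IsFactor w u := by
  obtain ⟨j, hj⟩ := h
  exact ⟨i + j, hj.trans (by simp [Nat.add_assoc])⟩

def factors (w : ℕ → α) (n : ℕ) : Set (List α) := {u | u.length = n ∧ IsFactor w u}

lemma factorComplexity_eq_ncard (w : ℕ → α) (n : ℕ) :
    factorComplexity w n = (factors w n).ncard := rfl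

lemma window_mem_factors (w : ℕ → α) (i n : ℕ) : window w i n ∈ factors w n :=
  ⟨length_window w i n, isFactor_window w i n⟩

lemma mem_factors_iff {w : ℕ → α} {n : ℕ} {u : List α} :
    u ∈ factors w n ↔ ∃ i, u = window w i n :=
  ⟨fun ⟨hl, i, hi⟩ => ⟨i, hl ▸ hi⟩, fun ⟨i, hi⟩ => hi ▸ window_mem_factors w i n⟩

lemma finite_factors [Finite α] (w : ℕ → α) (n : ℕ) : (factors w n).Finite :=
  (List.finite_length_eq α n).subset fun _ hu => hu.1

def rightSpecialFactors (w : ℕ → α) (n : ℕ) : Set (List α) :=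
  {v | v ∈ factors w n ∧ ∃ a b, a ≠ b ∧ IsFactor w (v ++ [a]) ∧ IsFactor w (v ++ [b])}

lemma rightSpecialFactors_subset {y w : ℕ → α} (h : ∀ u, IsFactor y u → IsFactor w u) (ℓ : ℕ) :
    rightSpecialFactors y ℓ ⊆ rightSpecialFactors w ℓ :=
  fun _ ⟨⟨hl, hv⟩, a, b, hab, ha, hb⟩ => ⟨⟨hl, h _ hv⟩, a, b, hab, h _ ha, h _ hb⟩

lemma ncard_factors_add_ncard_rightSpecialFactors_le [Finite α] (w : ℕ → α) (ℓ : ℕ) :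
    (factors w ℓ).ncard + (rightSpecialFactors w ℓ).ncard ≤ (factors w (ℓ + 1)).ncard := by
  have hext : ∀ v ∈ factors w ℓ, ∃ a, v ++ [a] ∈ factors w (ℓ + 1) := by
    intro v hv
    obtain ⟨i, rfl⟩ := mem_factors_iff.mp hv
    exact ⟨w (i + ℓ), window_succ w i ℓ ▸ window_mem_factors w i (ℓ + 1)⟩
  have : Nonempty α := ⟨w 0⟩
  choose! e he using hext
  have hext' : ∀ v ∈ rightSpecialFactors w ℓ, ∃ b, b ≠ e v ∧ v ++ [b] ∈ factors w (ℓ + 1) := by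
    rintro v ⟨hv, a, b, hab, ha, hb⟩
    by_cases hae : a = e v
    · exact ⟨b, hae ▸ hab.symm, by simp [hv.1], hb⟩
    · exact ⟨a, hae, by simp [hv.1], ha⟩
  choose! e' he' using hext'
  have hinj : ∀ (f : List α → α) (s : Set (List α)), InjOn (fun v => v ++ [f v]) s :=
    fun f s v _ v' _ h => (List.append_inj' h rfl).1
  have hdisj : Disjoint ((fun v => v ++ [e v]) '' factors w ℓ)
      ((fun v => v ++ [e' v]) '' rightSpecialFactors w ℓ) := by
    rw [Set.disjoint_left]
    rintro _ ⟨v, -, rfl⟩ ⟨v', hv', h⟩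
    obtain ⟨rfl, hlast⟩ := List.append_inj' h rfl
    exact (he' v' hv').1 (List.singleton_inj.mp hlast)
  have hfin := finite_factors w (ℓ + 1)
  have hsub : (fun v => v ++ [e v]) '' factors w ℓ ⊆ factors w (ℓ + 1) := by
    rintro _ ⟨v, hv, rfl⟩
    exact he v hv
  have hsub' : (fun v => v ++ [e' v]) '' rightSpecialFactors w ℓ ⊆ factors w (ℓ + 1) := by
    rintro _ ⟨v, hv, rfl⟩
    exact (he' v hv).2
  rw [← (hinj e (factors w ℓ)).ncard_image, ← (hinj e' (rightSpecialFactors w ℓ)).ncard_image,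
    ← Set.ncard_union_eq hdisj (hfin.subset hsub) (hfin.subset hsub')]
  exact Set.ncard_le_ncard (Set.union_subset hsub hsub') hfin

lemma ncard_factors_add_sum_ncard_rightSpecialFactors_le [Finite α] (w : ℕ → α) (a k : ℕ) :
    (factors w a).ncard + ∑ t ∈ Finset.range k, (rightSpecialFactors w (a + t)).ncard
      ≤ (factors w (a + k)).ncard := by
  induction k with
  | zero => simp
  | succ k ih =>
    rw [Finset.sum_range_succ]
    show _ ≤ (factors w (a + k + 1)).ncard
    have := ncard_factors_add_ncard_rightSpecialFactors_le w (a + k)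
    omega

lemma ncard_mul_le_ncard_of_pairwiseDisjoint {β : Type*} {𝒮 : Set (Set β)} {F : Set β}
    (hF : F.Finite) (hsub : ∀ s ∈ 𝒮, s ⊆ F) (hdisj : 𝒮.PairwiseDisjoint id) {m : ℕ}
    (hm : ∀ s ∈ 𝒮, m ≤ s.ncard) : 𝒮.ncard * m ≤ F.ncard := by
  have h𝒮 : 𝒮.Finite := hF.finite_subsets.subset hsub
  calc 𝒮.ncard * m = ∑ _s ∈ h𝒮.toFinset, m := by simp [Set.ncard_eq_toFinset_card _ h𝒮]
    _ ≤ ∑ s ∈ h𝒮.toFinset, s.ncard := Finset.sum_le_sum fun s hs => hm s (by simpa using hs)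
    _ = (⋃ s ∈ 𝒮, s).ncard := by
      rw [h𝒮.ncard_biUnion (fun s hs => hF.subset (hsub s hs)) hdisj,
        finsum_mem_eq_finite_toFinset_sum _ h𝒮]
    _ ≤ F.ncard := Set.ncard_le_ncard (Set.iUnion₂_subset hsub) hF

lemma mem_conjClass_iff {u v : List α} : v ∈ conjClass u ↔ u ~r v :=
  ⟨fun ⟨i, hi⟩ => ⟨i, hi.symm⟩, fun ⟨i, hi⟩ => ⟨i, hi.symm⟩⟩

lemma conjClass_eq_of_isRotated {u v : List α} (h : u ~r v) : conjClass u = conjClass v := by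
  ext x
  simp only [mem_conjClass_iff]
  exact ⟨h.symm.trans, h.trans⟩

lemma conjClass_rotate (u : List α) (i : ℕ) : conjClass (u.rotate i) = conjClass u :=
  conjClass_eq_of_isRotated (List.IsRotated.forall u i)

lemma conjClass_eq_of_mem {u v : List α} (h : v ∈ conjClass u) : conjClass v = conjClass u :=
  (conjClass_eq_of_isRotated (mem_conjClass_iff.mp h)).symm

lemma iterate_rotate_one (u : List α) (t : ℕ) :
    (fun v : List α => v.rotate 1)^[t] u = u.rotate t := by
  induction t with
  | zero => simp
  | succ t ih => rw [iterate_succ_apply', ih, List.rotate_rotate]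

lemma minimalPeriod_rotate_le_ncard_conjClass {u : List α} (hu : (conjClass u).Finite) :
    minimalPeriod (fun v : List α => v.rotate 1) u ≤ (conjClass u).ncard := by
  have hinj := iterate_injOn_Iio_minimalPeriod (f := fun v : List α => v.rotate 1) (x := u)
  rw [← Set.ncard_Iio_nat (minimalPeriod _ u), ← hinj.ncard_image]
  refine Set.ncard_le_ncard ?_ hu
  rintro _ ⟨t, -, rfl⟩
  exact ⟨t, iterate_rotate_one u t⟩

def lieClasses (w : ℕ → α) (n : ℕ) : Set (Set (List α)) :=
  {C | ∃ u : List α, u.length = n ∧ (∀ i : ℕ, IsFactor w (u.rotate i)) ∧ C = conjClass u}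

lemma lieComplexity_eq_ncard (w : ℕ → α) (n : ℕ) :
    lieComplexity w n = (lieClasses w n).ncard := rfl

lemma subset_factors_of_mem_lieClasses {w : ℕ → α} {n : ℕ} {c : Set (List α)}
    (hc : c ∈ lieClasses w n) : c ⊆ factors w n := by
  obtain ⟨u, hlen, hrot, rfl⟩ := hc
  rintro _ ⟨t, rfl⟩
  exact ⟨by rw [List.length_rotate, hlen], hrot t⟩

lemma pairwiseDisjoint_lieClasses (w : ℕ → α) (n : ℕ) : (lieClasses w n).PairwiseDisjoint id := by
  rintro _ ⟨u, -, -, rfl⟩ _ ⟨u', -, -, rfl⟩ hne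
  refine Set.disjoint_left.mpr fun x hx hx' => hne ?_
  rw [← conjClass_eq_of_mem hx, ← conjClass_eq_of_mem hx']

lemma lieComplexity_le_factorComplexity [Finite α] (w : ℕ → α) (n : ℕ) :
    lieComplexity w n ≤ factorComplexity w n := by
  have := ncard_mul_le_ncard_of_pairwiseDisjoint (finite_factors w n)
    (fun _ => subset_factors_of_mem_lieClasses) (pairwiseDisjoint_lieClasses w n) (m := 1) ?_
  · simpa [lieComplexity_eq_ncard, factorComplexity_eq_ncard] using this
  rintro c hc
  refine (Set.ncard_pos ((finite_factors w n).subset (subset_factors_of_mem_lieClasses hc))).mpr ?_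
  obtain ⟨u, -, -, rfl⟩ := hc
  exact ⟨u, 0, u.rotate_zero.symm⟩

def HasPeriodOn (y : ℕ → α) (p L : ℕ) : Prop := ∀ k, k + p < L → y (k + p) = y k

lemma hasPeriodOn_of_rotate_eq {y : ℕ → α} {d n : ℕ}
    (h : (window y 0 n).rotate d = window y 0 n) : HasPeriodOn y d n := by
  intro k hk
  have := congrArg (·[k]?) h
  simp only [List.getElem?_rotate (show k < (window y 0 n).length by simp; omega)] at this
  simpa [window, Nat.mod_eq_of_lt hk, List.getElem?_range, hk, show k < n by omega] using this

namespace HasPeriodOn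

variable {y z : ℕ → α} {p q d n L R : ℕ}

lemma mono (h : HasPeriodOn y p L) {L' : ℕ} (hL : L' ≤ L) : HasPeriodOn y p L' :=
  fun k hk => h k (by omega)

lemma shift (h : HasPeriodOn y p L) {a L' : ℕ} (ha : a + L' ≤ L) :
    HasPeriodOn (fun k => y (a + k)) p L' :=
  fun k hk => by simpa [Nat.add_assoc] using h (a + k) (by omega)

lemma congr (h : HasPeriodOn y p L) (e : ∀ k < L, y k = z k) : HasPeriodOn z p L :=
  fun k hk => by rw [← e _ hk, ← e k (by omega), h k hk]

lemma eq_mod (h : HasPeriodOn y p L) {m : ℕ} (hm : m < L) : y m = y (m % p) := by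
  induction m using Nat.strong_induction_on with
  | _ m ih =>
    rcases lt_or_ge m p with hmp | hpm
    · rw [Nat.mod_eq_of_lt hmp]
    rcases Nat.eq_zero_or_pos p with rfl | hp
    · rw [Nat.mod_zero]
    rw [Nat.mod_eq_sub_mod hpm, ← ih (m - p) (by omega) (by omega), ← h (m - p) (by omega),
      Nat.sub_add_cancel hpm]

lemma eq_of_modEq (h : HasPeriodOn y p L) {a b : ℕ} (ha : a < L) (hb : b < L)
    (hab : a ≡ b [MOD p]) : y a = y b := by
  rw [h.eq_mod ha, h.eq_mod hb]
  exact congrArg y hab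

/-- Fine–Wilf, with the weak bound given by the subtractive Euclidean algorithm. -/
theorem gcd (hp : HasPeriodOn y p L) (hq : HasPeriodOn y q L) :
    HasPeriodOn y (Nat.gcd p q) (L - (p + q)) := by
  induction hs : p + q using Nat.strong_induction_on generalizing p q L with
  | _ s ih =>
    wlog hpq : p ≤ q generalizing p q
    · simpa [Nat.gcd_comm, Nat.add_comm] using this hq hp (by omega) (by omega)
    rcases Nat.eq_zero_or_pos p with rfl | hp0
    · simpa using hq.mono (by omega)
    have hr : HasPeriodOn y (q - p) (L - p) := fun k hk => by
      rw [← hp (k + (q - p)) (by omega), show k + (q - p) + p = k + q by omega, hq k (by omega)]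
    have := ih (p + (q - p)) (by omega) (hp.mono (Nat.sub_le L p)) hr rfl
    rwa [Nat.gcd_sub_self_right hpq, show L - p - (p + (q - p)) = L - s by omega] at this

lemma mod_eq_mod (hp : HasPeriodOn y p L) (hq : HasPeriodOn y q L) (hp0 : 0 < p) (hq0 : 0 < q)
    (hL : 2 * (p + q) ≤ L) (m : ℕ) : y (m % p) = y (m % q) := by
  have hg := hp.gcd hq
  have := Nat.mod_lt m hp0
  have := Nat.mod_lt m hq0
  rw [hg.eq_mod (m := m % p) (by omega), hg.eq_mod (m := m % q) (by omega),
    Nat.mod_mod_of_dvd _ (Nat.gcd_dvd_left p q), Nat.mod_mod_of_dvd _ (Nat.gcd_dvd_right p q)]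

lemma window_eq_rotate (h : HasPeriodOn y d R) (hdn : d ∣ n) {j : ℕ} (hj : j + n ≤ R) :
    window y j n = (window y 0 n).rotate j := by
  refine List.ext_getElem (by simp) fun k hk _ => ?_
  have hkn : k < n := by simpa using hk
  rw [List.getElem_rotate]
  simp only [getElem_window, length_window, Nat.zero_add]
  have := Nat.mod_lt (k + j) (by omega : 0 < n)
  refine h.eq_of_modEq (by omega) (by omega) ?_
  rw [Nat.add_comm j k]
  exact (Nat.mod_modEq (k + j) n).symm.of_dvd hdn

lemma window_mem_rightSpecialFactors (h : HasPeriodOn y d R) (hbreak : y R ≠ y (R - d))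
    {ℓ : ℕ} (hℓ : ℓ + d ≤ R) : window y (R - ℓ) ℓ ∈ rightSpecialFactors y ℓ := by
  have hshift : window y (R - ℓ - d) ℓ = window y (R - ℓ) ℓ :=
    window_eq_window_iff.mpr fun k hk => by
      rw [← h (R - ℓ - d + k) (by omega)]
      congr 1
      omega
  refine ⟨window_mem_factors y _ ℓ, y (R - d), y R, hbreak.symm, ?_, ?_⟩
  · rw [← hshift, show R - d = R - ℓ - d + ℓ by omega, ← window_succ]
    exact isFactor_window y _ _
  · rw [show R = R - ℓ + ℓ by omega, Nat.add_sub_cancel, ← window_succ]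
    exact isFactor_window y _ _

lemma apply_sub_eq (h : HasPeriodOn y d R) (hd : 0 < d) (hdn : d ∣ n) (hn : n ≤ R)
    {ℓ : ℕ} (hdℓ : d ≤ ℓ) (hℓ : ℓ ≤ R) {k : ℕ} (hk : k < n) :
    y (R - n + k) = y (R - ℓ + (k + ℓ) % d) := by
  have := Nat.mod_lt (k + ℓ) hd
  refine h.eq_of_modEq (by omega) (by omega) ?_
  calc R - n + k ≡ R - n + k + n [MOD d] := ((Nat.modEq_zero_iff_dvd.mpr hdn).add_left _).symm
    _ = R - ℓ + (k + ℓ) := by omega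
    _ ≡ R - ℓ + (k + ℓ) % d [MOD d] := ((Nat.mod_modEq _ _).add_left _).symm

lemma exists_maximal {d : ℕ} (h : HasPeriodOn y d n) (hy : ∃ m, y (m + d) ≠ y m) :
    ∃ R, n ≤ R ∧ HasPeriodOn y d R ∧ y R ≠ y (R - d) := by
  classical
  refine ⟨Nat.find hy + d, ?_, fun k hk => ?_, by simpa using Nat.find_spec hy⟩
  · by_contra hlt
    exact Nat.find_spec hy (h _ (by omega))
  · by_contra hne
    exact absurd (Nat.find_min' hy hne) (by omega)

end HasPeriodOn

def EventuallyPeriodic (w : ℕ → α) : Prop := ∃ i d, 0 < d ∧ ∀ j, i ≤ j → w (j + d) = w j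

lemma factorComplexity_le_of_periodic {w : ℕ → α} {i d : ℕ} (hd : 0 < d)
    (h : ∀ j, i ≤ j → w (j + d) = w j) (n : ℕ) : factorComplexity w n ≤ i + d := by
  have hstart : ∀ j, ∃ j' < i + d, window w j n = window w j' n := by
    intro j
    induction j using Nat.strong_induction_on with
    | _ j ih =>
      by_cases hj : j < i + d
      · exact ⟨j, hj, rfl⟩
      obtain ⟨j', hj', e⟩ := ih (j - d) (by omega)
      refine ⟨j', hj', Eq.trans (window_eq_window_iff.mpr fun k _ => ?_) e⟩
      rw [← h (j - d + k) (by omega)]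
      congr 1
      omega
  have hsub : factors w n ⊆ (fun j => window w j n) '' Iio (i + d) := by
    intro u hu
    obtain ⟨j, rfl⟩ := mem_factors_iff.mp hu
    obtain ⟨j', hj', e⟩ := hstart j
    exact ⟨j', hj', e.symm⟩
  calc factorComplexity w n ≤ ((fun j => window w j n) '' Iio (i + d)).ncard :=
        Set.ncard_le_ncard hsub ((finite_Iio _).image _)
    _ ≤ (Iio (i + d)).ncard := Set.ncard_image_le (finite_Iio _)
    _ = i + d := Set.ncard_Iio_nat _

structure IsRunOfClass (w : ℕ → α) (n : ℕ) (c : Set (List α)) (y : ℕ → α) (d R : ℕ) : Prop where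
  isFactor : ∀ u, IsFactor y u → IsFactor w u
  period_pos : 0 < d
  period_dvd : d ∣ n
  period_le_ncard : d ≤ c.ncard
  le_length : n ≤ R
  hasPeriodOn : HasPeriodOn y d R
  apply_ne : y R ≠ y (R - d)
  eq_conjClass : c = conjClass (window y (R - n) n)

lemma exists_isRunOfClass [Finite α] {w : ℕ → α} (hw : ¬ EventuallyPeriodic w) {n : ℕ}
    (hn : 0 < n) {c : Set (List α)} (hc : c ∈ lieClasses w n) :
    ∃ y d R, IsRunOfClass w n c y d R := by
  have hcfin : c.Finite := (finite_factors w n).subset (subset_factors_of_mem_lieClasses hc)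
  obtain ⟨u, hlen, hrot, rfl⟩ := hc
  obtain ⟨i, hi⟩ := mem_factors_iff.mp (⟨by simp [hlen], hrot 0⟩ : u.rotate 0 ∈ factors w n)
  set y : ℕ → α := fun k => w (i + k)
  have hu : u = window y 0 n := by rw [window_shift, Nat.add_zero, ← hi, u.rotate_zero]
  set f : List α → List α := fun v => v.rotate 1
  have hfix : IsPeriodicPt f n u := by
    rw [IsPeriodicPt, IsFixedPt, iterate_rotate_one, ← hlen, List.rotate_length]
  set d := minimalPeriod f u
  have hd : 0 < d := hfix.minimalPeriod_pos hn
  have hrotd : u.rotate d = u := iterate_rotate_one u d ▸ isPeriodicPt_minimalPeriod f u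
  have hyn : HasPeriodOn y d n := hasPeriodOn_of_rotate_eq (hu ▸ hrotd)
  have hy : ∃ m, y (m + d) ≠ y m := by
    by_contra! hper
    refine hw ⟨i, d, hd, fun j hj => ?_⟩
    simpa [y, ← Nat.add_assoc, Nat.add_sub_cancel' hj] using hper (j - i)
  obtain ⟨R, hnR, hR, hne⟩ := hyn.exists_maximal hy
  refine ⟨y, d, R, fun _ => IsFactor.of_shift, hd, hfix.minimalPeriod_dvd,
    minimalPeriod_rotate_le_ncard_conjClass hcfin, hnR, hR, hne, ?_⟩
  rw [hR.window_eq_rotate hfix.minimalPeriod_dvd (by omega), conjClass_rotate, hu]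

namespace IsRunOfClass

variable {w y y' : ℕ → α} {n d d' R R' ℓ : ℕ} {c c' : Set (List α)}

lemma window_mem_rightSpecialFactors (h : IsRunOfClass w n c y d R) (hℓ : ℓ + c.ncard ≤ n) :
    window y (R - ℓ) ℓ ∈ rightSpecialFactors w ℓ :=
  rightSpecialFactors_subset h.isFactor ℓ <| h.hasPeriodOn.window_mem_rightSpecialFactors h.apply_ne
    (by have := h.period_le_ncard; have := h.le_length; omega)

lemma eq_of_window_eq (h : IsRunOfClass w n c y d R) (h' : IsRunOfClass w n c' y' d' R')
    (hℓ : 4 * c.ncard ≤ ℓ) (hℓ' : 4 * c'.ncard ≤ ℓ) (hℓn : ℓ ≤ n)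
    (heq : window y (R - ℓ) ℓ = window y' (R' - ℓ) ℓ) : c = c' := by
  have := h.period_le_ncard
  have := h'.period_le_ncard
  have := h.le_length
  have := h'.le_length
  have hyy' := window_eq_window_iff.mp heq
  have hz : HasPeriodOn (fun k => y (R - ℓ + k)) d ℓ := h.hasPeriodOn.shift (by omega)
  have hz' : HasPeriodOn (fun k => y (R - ℓ + k)) d' ℓ :=
    (h'.hasPeriodOn.shift (by omega)).congr fun k hk => (hyy' k hk).symm
  rw [h.eq_conjClass, h'.eq_conjClass]
  refine congrArg conjClass (window_eq_window_iff.mpr fun k hk => ?_)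
  have := Nat.mod_lt (k + ℓ) h'.period_pos
  calc y (R - n + k) = y (R - ℓ + (k + ℓ) % d) :=
        h.hasPeriodOn.apply_sub_eq h.period_pos h.period_dvd h.le_length (by omega) (by omega) hk
    _ = y (R - ℓ + (k + ℓ) % d') :=
        hz.mod_eq_mod hz' h.period_pos h'.period_pos (by omega) (k + ℓ)
    _ = y' (R' - ℓ + (k + ℓ) % d') := hyy' _ (by omega)
    _ = y' (R' - n + k) := (h'.hasPeriodOn.apply_sub_eq h'.period_pos h'.period_dvd h'.le_length
        (by omega) (by omega) hk).symm

end IsRunOfClass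

lemma ncard_le_ncard_rightSpecialFactors [Finite α] {w : ℕ → α} (hw : ¬ EventuallyPeriodic w)
    {n ℓ : ℕ} (hn : 0 < n) {S : Set (Set (List α))} (hS : S ⊆ lieClasses w n)
    (hℓ : ∀ c ∈ S, 4 * c.ncard ≤ ℓ ∧ ℓ + c.ncard ≤ n) :
    S.ncard ≤ (rightSpecialFactors w ℓ).ncard := by
  have : Nonempty α := ⟨w 0⟩
  choose! y d R hr using fun c (hc : c ∈ S) => exists_isRunOfClass hw hn (hS hc)
  refine Set.ncard_le_ncard_of_injOn (fun c => window (y c) (R c - ℓ) ℓ)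
    (fun c hc => (hr c hc).window_mem_rightSpecialFactors (hℓ c hc).2)
    (fun c hc c' hc' heq => (hr c hc).eq_of_window_eq (hr c' hc') (hℓ c hc).1 (hℓ c' hc').1
      (by have := (hℓ c hc).2; omega) heq)
    ((finite_factors w ℓ).subset fun _ hv => hv.1)

lemma le_mul_of_mul_le_linear {s k m a C : ℕ} (hk : 0 < k) (hm : m ≤ a * k)
    (h : s * k ≤ C * m + C) : s ≤ (a + 1) * C := by
  refine Nat.le_of_mul_le_mul_right ?_ hk
  calc s * k ≤ C * m + C := h
    _ ≤ C * (a * k) + C * k := by gcongr; exact Nat.le_mul_of_pos_right C hk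
    _ = (a + 1) * C * k := by ring

theorem lieComplexity_le_of_not_eventuallyPeriodic [Finite α] {w : ℕ → α}
    (hw : ¬ EventuallyPeriodic w) {C : ℕ} (hC : ∀ n, factorComplexity w n ≤ C * n + C) (n : ℕ) :
    lieComplexity w n ≤ 14 * C := by
  rcases lt_or_ge n 4 with hn | hn
  · calc lieComplexity w n ≤ C * n + C := (lieComplexity_le_factorComplexity w n).trans (hC n)
      _ ≤ 14 * C := by nlinarith
  set L := lieClasses w n
  set T : Set (Set (List α)) := {c | 8 * c.ncard ≤ n}
  have hLfin : L.Finite :=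
    (finite_factors w n).finite_subsets.subset fun _ => subset_factors_of_mem_lieClasses
  have hlarge : (L \ T).ncard ≤ 9 * C := by
    refine le_mul_of_mul_le_linear (k := n / 8 + 1) (m := n) (Nat.succ_pos _) (by omega) ?_
    refine (ncard_mul_le_ncard_of_pairwiseDisjoint (finite_factors w n)
      (fun c hc => subset_factors_of_mem_lieClasses hc.1)
      ((pairwiseDisjoint_lieClasses w n).subset sdiff_subset) fun c hc => ?_).trans (hC n)
    have : ¬ 8 * c.ncard ≤ n := hc.2
    omega
  have hsmall : (L ∩ T).ncard ≤ 5 * C := by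
    refine le_mul_of_mul_le_linear (k := n / 4) (m := n / 2 + n / 4) (by omega) (by omega) ?_
    calc (L ∩ T).ncard * (n / 4) = ∑ _t ∈ Finset.range (n / 4), (L ∩ T).ncard := by simp [mul_comm]
      _ ≤ ∑ t ∈ Finset.range (n / 4), (rightSpecialFactors w (n / 2 + t)).ncard :=
        Finset.sum_le_sum fun t ht => ncard_le_ncard_rightSpecialFactors hw (by omega)
          inter_subset_left fun c hc => by
            have : 8 * c.ncard ≤ n := hc.2
            have := Finset.mem_range.mp ht
            omega
      _ ≤ factorComplexity w (n / 2 + n / 4) := by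
        have := ncard_factors_add_sum_ncard_rightSpecialFactors_le w (n / 2) (n / 4)
        rw [factorComplexity_eq_ncard]
        omega
      _ ≤ C * (n / 2 + n / 4) + C := hC _
  rw [lieComplexity_eq_ncard, ← Set.ncard_inter_add_ncard_sdiff_eq_ncard L T hLfin]
  omega

end

/-- If `w` has linear factor complexity, then its Lie complexity is uniformly bounded. -/
theorem lieComplexity_bounded_of_linear {α : Type*} [Fintype α] (w : ℕ → α)
    (C : ℕ) (hC : ∀ n : ℕ, factorComplexity w n ≤ C * n + C) :
    ∃ B : ℕ, ∀ n : ℕ, lieComplexity w n ≤ B := by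
  by_cases hw : EventuallyPeriodic w
  · obtain ⟨i, d, hd, hper⟩ := hw
    exact ⟨i + d, fun n => (lieComplexity_le_factorComplexity w n).trans
      (factorComplexity_le_of_periodic hd hper n)⟩
  · exact ⟨14 * C, lieComplexity_le_of_not_eventuallyPeriodic hw hC⟩
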